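/- There exist a complex number ξ ∈ ℂ such that 1, ξ and ξ² are linearly independent over ℚ(i), and a constant c > 0 such that, for every sufficiently large real number X, there is a nonzero triple (x₀, x₁, x₂) ∈ ℤ[i]³ of Gaussian integers with |x₀| ≤ X and max{|x₀ξ − x₁|, |x₀ξ² − x₂|} ≤ c·X^{−1/γ}. -/

import Mathlib

/-!
Roy's construction of extremal numbers. Let `w₀ = !![1, 1; 1, 0]`, `w₁ = !![4, 3; 3, 2]` and
`w_{j+2} = w_{j+1} T_j w_j`, where `T_j` alternates between `!![3, 1; 2, 1]` and its transpose.
Each `w_j = !![q_j, p_j; p_j, r_j]` is symmetric with `det w_j = ±1` and `0 ≤ r_j ≤ p_j ≤ q_j`,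
so `q_{j+2} ≍ q_{j+1} q_j` and `p_j / q_j` converges to a real `ξ` with
`|q_j ξ - p_j|, |q_j ξ² - r_j| ≪ q_j⁻¹`; for `q_j ≤ X < q_{j+1}` the integer triple
`(q_j, p_j, r_j)` does the job, because `log q_{j+1} - γ log q_j` stays bounded.

Writing `x(A) = (a, b, d)` for symmetric `A = !![a, b; b, d]` and `J = !![0, 1; -1, 0]`, Roy's
identity `det (x(A), x(B), x(C)) = -tr (J A J B J C)` and `w_{j+2} = w_{j+1} T_j w_j` show that
three consecutive triples `x(w_j)` have determinant `±1`. An integer relation `a + b ξ + c ξ² = 0` forces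
`a q_j + b p_j + c r_j = 0` for all large `j`, hence is trivial. Since `ξ` is real, a relation
over `ℚ(i)` splits into real and imaginary parts, which are relations over `ℚ`.
-/

open Complex IntermediateField GaussianInt Matrix Filter Topology
open scoped goldenRatio

lemma exists_tendsto_dist_le_two_mul {α : Type*} [PseudoMetricSpace α] [CompleteSpace α]
    {x : ℕ → α} {e : ℕ → ℝ} (he : ∀ n, e (n + 1) ≤ e n / 2)
    (hx : ∀ n, dist (x n) (x (n + 1)) ≤ e n) :
    ∃ a, Tendsto x atTop (𝓝 a) ∧ ∀ n, dist (x n) a ≤ 2 * e n := by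
  have hgeom (n m : ℕ) : e (n + m) ≤ e n / 2 ^ m := by
    induction m with
    | zero => simp
    | succ m ih =>
      calc e (n + (m + 1)) ≤ e (n + m) / 2 := he (n + m)
        _ ≤ e n / 2 ^ m / 2 := by gcongr
        _ = e n / 2 ^ (m + 1) := by rw [pow_succ, div_div]
  have hshift (n m : ℕ) : dist (x (n + m)) (x (n + m + 1)) ≤ 2 * e n / 2 / 2 ^ m := by
    simpa using (hx (n + m)).trans (hgeom n m)
  obtain ⟨a, ha⟩ := cauchySeq_tendsto_of_complete <|
    cauchySeq_of_le_geometric_two (C := 2 * e 0) (by simpa using hshift 0)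
  refine ⟨a, ha, fun n ↦ ?_⟩
  simpa using dist_le_of_le_geometric_two_of_tendsto₀ (f := fun m ↦ x (n + m)) (hshift n)
    (by simpa only [add_comm n] using (tendsto_add_atTop_iff_nat n).2 ha)

lemma exists_le_lt_succ {α : Type*} [LinearOrder α] {u : ℕ → α} {X : α} (h0 : u 0 ≤ X) (n : ℕ) (hn : X < u n) :
    ∃ j, u j ≤ X ∧ X < u (j + 1) := by
  induction n with
  | zero => exact absurd h0 hn.not_ge
  | succ n ih =>
    by_cases h : u n ≤ X
    · exact ⟨n, h, hn⟩
    · exact ih (not_le.1 h)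

lemma abs_mul_sq_sub_le {ξ q p r : ℝ} (hq : 0 < q) (hξ : |ξ| ≤ 1) (hp : 0 ≤ p) (hpq : p ≤ q)
    (hdet : |p ^ 2 - q * r| = 1) (h1 : |q * ξ - p| ≤ 2 / q) : |q * ξ ^ 2 - r| ≤ 5 / q := by
  have hsplit :
      q * ξ ^ 2 - r = ξ * (q * ξ - p) + p / q * (q * ξ - p) + (p ^ 2 - q * r) / q := by
    field_simp; ring
  have hpq' : |p / q| ≤ 1 := by
    rw [abs_of_nonneg (div_nonneg hp hq.le)]; exact div_le_one_of_le₀ hpq hq.le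
  calc |q * ξ ^ 2 - r|
      ≤ |ξ| * |q * ξ - p| + |p / q| * |q * ξ - p| + |p ^ 2 - q * r| / q := by
        rw [hsplit, ← abs_mul, ← abs_mul, ← abs_of_pos hq, ← abs_div, abs_of_pos hq]
        exact abs_add_three _ _ _
    _ ≤ 1 * (2 / q) + 1 * (2 / q) + 1 / q := by rw [hdet]; gcongr
    _ = 5 / q := by ring

lemma int_combination_eq_zero {ξ : ℝ} {a b c q p r : ℤ} (hrel : a + b * ξ + c * ξ ^ 2 = 0)
    (hq : (0 : ℝ) < q) (h1 : |q * ξ - p| ≤ 2 / q) (h2 : |q * ξ ^ 2 - r| ≤ 5 / q)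
    (hbig : 2 * |(b : ℝ)| + 5 * |(c : ℝ)| < q) : q * a + p * b + r * c = 0 := by
  have hexp : ((q * a + p * b + r * c : ℤ) : ℝ) = -(b * (q * ξ - p) + c * (q * ξ ^ 2 - r)) := by
    push_cast; linear_combination (q : ℝ) * hrel
  have hsmall : |((q * a + p * b + r * c : ℤ) : ℝ)| < 1 :=
    calc |((q * a + p * b + r * c : ℤ) : ℝ)|
        ≤ |(b : ℝ)| * |q * ξ - p| + |(c : ℝ)| * |q * ξ ^ 2 - r| := by
          rw [hexp, abs_neg, ← abs_mul, ← abs_mul]; exact abs_add_le _ _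
      _ ≤ |(b : ℝ)| * (2 / q) + |(c : ℝ)| * (5 / q) := by gcongr
      _ = (2 * |(b : ℝ)| + 5 * |(c : ℝ)|) / q := by ring
      _ < 1 := (div_lt_one hq).2 hbig
  exact Int.abs_lt_one_iff.1 (by exact_mod_cast hsmall)

lemma abs_sub_goldenRatio_mul_le {a : ℕ → ℝ} {B : ℝ}
    (h : ∀ j, |a (j + 2) - a (j + 1) - a j| ≤ B) (h0 : |a 1 - φ * a 0| ≤ φ ^ 2 * B) (j : ℕ) :
    |a (j + 1) - φ * a j| ≤ φ ^ 2 * B := by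
  induction j with
  | zero => simpa using h0
  | succ j ih =>
    have hψ : a (j + 2) - φ * a (j + 1)
        = (a (j + 2) - a (j + 1) - a j) + ψ * (a (j + 1) - φ * a j) := by
      linear_combination (-a (j + 1)) * Real.goldenRatio_add_goldenConj
        + a j * Real.goldenRatio_mul_goldenConj
    have habsψ : |ψ| = φ - 1 := by
      rw [abs_of_neg Real.goldenConj_neg, ← Real.one_sub_goldenConj]; ring
    calc |a (j + 1 + 1) - φ * a (j + 1)|
        ≤ |a (j + 2) - a (j + 1) - a j| + |ψ| * |a (j + 1) - φ * a j| := by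
          rw [hψ, ← abs_mul]; exact abs_add_le _ _
      _ ≤ B + (φ - 1) * (φ ^ 2 * B) := by
          rw [habsψ]; gcongr
          · exact h j
          · linarith [Real.one_lt_goldenRatio]
      _ = φ ^ 2 * B := by linear_combination ((φ - 1) * B) * Real.goldenRatio_sq

lemma exists_rat_eq_add_mul_I {z : ℂ} (hz : z ∈ ℚ⟮I⟯) : ∃ a b : ℚ, z = a + b * I := by
  rw [← mem_toSubalgebra, adjoin_simple_toSubalgebra_of_isAlgebraic isIntegral_rat_I.isAlgebraic]
    at hz
  induction hz using Algebra.adjoin_induction with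
  | mem x hx => exact ⟨0, 1, by simp [Set.mem_singleton_iff.1 hx]⟩
  | algebraMap a => exact ⟨a, 0, by simp⟩
  | add x y _ _ hx hy =>
    obtain ⟨a, b, rfl⟩ := hx
    obtain ⟨c, d, rfl⟩ := hy
    exact ⟨a + c, b + d, by push_cast; ring⟩
  | mul x y _ _ hx hy =>
    obtain ⟨a, b, rfl⟩ := hx
    obtain ⟨c, d, rfl⟩ := hy
    exact ⟨a * c - b * d, a * d + b * c, by push_cast; linear_combination (b * d : ℂ) * I_sq⟩

lemma LinearIndependent.ofReal_adjoin_I {ι : Type*} {v : ι → ℝ} (hv : LinearIndependent ℚ v) :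
    LinearIndependent ℚ⟮I⟯ (fun i ↦ (v i : ℂ)) := by
  rw [linearIndependent_iff'] at hv ⊢
  intro s g hg i hi
  choose a b hab using fun i ↦ exists_rat_eq_add_mul_I (g i).2
  have hre : ∑ i ∈ s, a i • v i = 0 := by
    simpa [Algebra.smul_def, hab, Rat.smul_def] using congrArg re hg
  have him : ∑ i ∈ s, b i • v i = 0 := by
    simpa [Algebra.smul_def, hab, Rat.smul_def] using congrArg im hg
  ext
  simp [hab, hv s a hre i hi, hv s b him i hi]

lemma norm_toComplex_intCast_mul_sub (a b : ℤ) (t : ℝ) :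
    ‖toComplex a * t - toComplex b‖ = |a * t - b| := by
  rw [map_intCast, map_intCast, ← Real.norm_eq_abs, ← Complex.norm_real]
  push_cast; rfl

lemma Matrix.mul_apply_nonneg {S l m n : Type*} [Semiring S] [PartialOrder S]
    [IsOrderedRing S] [Fintype m] {A : Matrix l m S} {B : Matrix m n S}
    (hA : ∀ i k, 0 ≤ A i k) (hB : ∀ i k, 0 ≤ B i k) (i : l) (k : n) : 0 ≤ (A * B) i k :=
  Finset.sum_nonneg fun l _ ↦ mul_nonneg (hA i l) (hB l k)

lemma Matrix.IsSymm.eq_fin_two {α : Type*} {A : Matrix (Fin 2) (Fin 2) α} (hA : A.IsSymm) :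
    A = !![A 0 0, A 0 1; A 0 1, A 1 1] := by
  have h10 : A 1 0 = A 0 1 := hA.apply 0 1
  ext i j; fin_cases i <;> fin_cases j <;> simp [h10]

section SymmetricMatrix

variable {R : Type*} [CommRing R]

def symVec (A : Matrix (Fin 2) (Fin 2) R) : Fin 3 → R := ![A 0 0, A 0 1, A 1 1]

lemma det_symVec_eq_neg_trace {A B C : Matrix (Fin 2) (Fin 2) R}
    (hA : A.IsSymm) (hB : B.IsSymm) (hC : C.IsSymm) :
    (of ![symVec A, symVec B, symVec C]).det
      = -(!![0, 1; -1, 0] * A * !![0, 1; -1, 0] * B * !![0, 1; -1, 0] * C).trace := by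
  rw [hA.eq_fin_two, hB.eq_fin_two, hC.eq_fin_two]
  simp only [det_fin_three, trace_fin_two, mul_fin_two, symVec, of_apply, cons_val_zero,
    cons_val_one, cons_val_two, head_cons, tail_cons]
  ring

lemma trace_J_mul_J_mul_J_mul {A B : Matrix (Fin 2) (Fin 2) R} (T : Matrix (Fin 2) (Fin 2) R)
    (hA : A.IsSymm) (hB : B.IsSymm) :
    (!![0, 1; -1, 0] * A * !![0, 1; -1, 0] * B * !![0, 1; -1, 0] * (B * T * A)).trace
      = -(A.det * B.det * (T 1 0 - T 0 1)) := by
  rw [hA.eq_fin_two, hB.eq_fin_two, eta_fin_two T]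
  simp only [det_fin_two_of, trace_fin_two_of, mul_fin_two, of_apply, cons_val', cons_val_zero,
    cons_val_one, cons_val_fin_one]
  ring

lemma mul_mul_apply_cross (A B T : Matrix (Fin 2) (Fin 2) R) :
    B 0 0 * (B * T * A) 1 0 - B 1 0 * (B * T * A) 0 0 = B.det * (T * A) 1 0 := by
  simp only [mul_apply, Fin.sum_univ_two, det_fin_two]
  ring

end SymmetricMatrix

def twist (j : ℕ) : Matrix (Fin 2) (Fin 2) ℤ :=
  if Even j then !![3, 1; 2, 1] else !![3, 2; 1, 1]

def fibMatrix : ℕ → Matrix (Fin 2) (Fin 2) ℤ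
  | 0 => !![1, 1; 1, 0]
  | 1 => !![4, 3; 3, 2]
  | j + 2 => fibMatrix (j + 1) * twist j * fibMatrix j

lemma twist_eq (j : ℕ) : twist j = !![3, 1; 2, 1] ∨ twist j = !![3, 2; 1, 1] := by
  unfold twist; split_ifs <;> simp

lemma twist_transpose (j : ℕ) : (twist j)ᵀ = twist (j + 1) := by
  by_cases h : Even j <;> simp only [twist, h, Nat.even_add_one, if_true, if_false,
    not_true_eq_false, not_false_eq_true] <;> decide

lemma twist_add_two (j : ℕ) : twist (j + 2) = twist j := by
  simp [twist, Nat.even_add]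

lemma det_twist (j : ℕ) : (twist j).det = 1 := by
  rcases twist_eq j with h | h <;> rw [h] <;> decide

lemma twist_nonneg (j : ℕ) (i k : Fin 2) : 0 ≤ twist j i k := by
  rcases twist_eq j with h | h <;> rw [h] <;> fin_cases i <;> fin_cases k <;> decide

lemma mul_twist_mul_apply_bounds {A B : Matrix (Fin 2) (Fin 2) ℤ} (j : ℕ)
    (hA : 0 ≤ A 1 0) (hA' : A 1 0 ≤ A 0 0) (hB : 0 ≤ B 0 1) (hB' : B 0 1 ≤ B 0 0) :
    3 * (B 0 0 * A 0 0) ≤ (B * twist j * A) 0 0 ∧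
      (B * twist j * A) 0 0 ≤ 8 * (B 0 0 * A 0 0) := by
  rcases twist_eq j with h | h <;> rw [h] <;>
    simp only [mul_apply, of_apply, cons_val', cons_val_fin_one, Fin.sum_univ_two, cons_val_zero,
      cons_val_one, mul_one] <;>
    constructor <;> nlinarith [mul_nonneg hB hA, mul_nonneg hB (hA.trans hA')]

lemma twist_mul_apply_bounds {A : Matrix (Fin 2) (Fin 2) ℤ} (j : ℕ)
    (hA : 0 ≤ A 1 0) (hA' : A 1 0 ≤ A 0 0) :
    0 ≤ (twist j * A) 1 0 ∧ (twist j * A) 1 0 ≤ 3 * A 0 0 := by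
  rcases twist_eq j with h | h <;> rw [h] <;>
    simp only [mul_apply, of_apply, cons_val', cons_val_fin_one, Fin.sum_univ_two, cons_val_zero,
      cons_val_one, one_mul] <;>
    constructor <;> linarith

lemma fibMatrix_add_two (j : ℕ) :
    fibMatrix (j + 2) = fibMatrix (j + 1) * twist j * fibMatrix j := rfl

-- Symmetry alone does not propagate: the commutation relation is the inductive strengthening.
lemma isSymm_fibMatrix_and_comm (j : ℕ) :
    (fibMatrix j).IsSymm ∧ (fibMatrix (j + 1)).IsSymm ∧
      fibMatrix j * twist (j + 1) * fibMatrix (j + 1)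
        = fibMatrix (j + 1) * twist j * fibMatrix j := by
  induction j with
  | zero => exact ⟨by decide, by decide, by decide⟩
  | succ j ih =>
    obtain ⟨hj, hj1, hcomm⟩ := ih
    refine ⟨hj1, ?_, ?_⟩
    · rw [IsSymm, fibMatrix_add_two, transpose_mul, transpose_mul, hj, hj1, twist_transpose,
        ← hcomm, Matrix.mul_assoc]
    · rw [fibMatrix_add_two, twist_add_two]
      simp only [Matrix.mul_assoc] at hcomm ⊢
      rw [hcomm]

lemma isSymm_fibMatrix (j : ℕ) : (fibMatrix j).IsSymm := (isSymm_fibMatrix_and_comm j).1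

lemma abs_det_fibMatrix (j : ℕ) : |(fibMatrix j).det| = 1 := by
  induction j using Nat.twoStepInduction with
  | zero => decide
  | one => decide
  | more j ih ih1 =>
    rw [fibMatrix_add_two, det_mul, det_mul, det_twist, mul_one, abs_mul, ih, ih1, mul_one]

-- For `w = !![q, p; p, r]`, the entries of `w * !![1, 0; -1, 1] = !![q - p, p; p - r, r]` are
-- nonnegative iff `0 ≤ r ≤ p ≤ q`; in this form the invariant is closed under products.
lemma fibMatrix_mul_nonneg (j : ℕ) (i k : Fin 2) :
    0 ≤ (fibMatrix j * !![(1 : ℤ), 0; -1, 1]) i k := by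
  induction j using Nat.twoStepInduction generalizing i k with
  | zero => fin_cases i <;> fin_cases k <;> decide
  | one => fin_cases i <;> fin_cases k <;> decide
  | more j ih ih1 =>
    have hw : fibMatrix (j + 1) = fibMatrix (j + 1) * !![1, 0; -1, 1] * !![1, 0; 1, 1] := by
      rw [Matrix.mul_assoc, show !![(1 : ℤ), 0; -1, 1] * !![1, 0; 1, 1] = 1 by decide, mul_one]
    rw [fibMatrix_add_two, Matrix.mul_assoc]
    refine mul_apply_nonneg (mul_apply_nonneg ?_ (twist_nonneg j)) ih i k
    rw [hw]
    exact mul_apply_nonneg ih1 fun i k ↦ by fin_cases i <;> fin_cases k <;> decide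

namespace Extremal

def q (j : ℕ) : ℤ := fibMatrix j 0 0

def p (j : ℕ) : ℤ := fibMatrix j 0 1

def r (j : ℕ) : ℤ := fibMatrix j 1 1

lemma q_zero : q 0 = 1 := rfl

lemma fibMatrix_one_zero (j : ℕ) : fibMatrix j 1 0 = p j := (isSymm_fibMatrix j).apply 0 1

lemma p_nonneg (j : ℕ) : 0 ≤ p j := by
  simpa [p, mul_apply, Fin.sum_univ_two] using fibMatrix_mul_nonneg j 0 1

lemma p_le_q (j : ℕ) : p j ≤ q j := by
  simpa [p, q, mul_apply, Fin.sum_univ_two, ← sub_eq_add_neg] using fibMatrix_mul_nonneg j 0 0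

lemma abs_p_sq_sub_q_mul_r (j : ℕ) : |p j ^ 2 - q j * r j| = 1 := by
  rw [← abs_neg, ← abs_det_fibMatrix j, det_fin_two, fibMatrix_one_zero, p, q, r]
  ring_nf

lemma q_add_two_bounds (j : ℕ) :
    3 * (q (j + 1) * q j) ≤ q (j + 2) ∧ q (j + 2) ≤ 8 * (q (j + 1) * q j) := by
  apply mul_twist_mul_apply_bounds j
  · rw [fibMatrix_one_zero]; exact p_nonneg j
  · rw [fibMatrix_one_zero]; exact p_le_q j
  · exact p_nonneg (j + 1)
  · exact p_le_q (j + 1)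

lemma one_le_q (j : ℕ) : 1 ≤ q j := by
  induction j using Nat.twoStepInduction with
  | zero => decide
  | one => decide
  | more j ih ih1 => nlinarith [(q_add_two_bounds j).1]

lemma q_pos (j : ℕ) : (0 : ℝ) < q j := by exact_mod_cast one_le_q j

lemma three_mul_q_le_q_succ (j : ℕ) : 3 * q j ≤ q (j + 1) := by
  cases j with
  | zero => decide
  | succ j => nlinarith [(q_add_two_bounds j).1, one_le_q j, one_le_q (j + 1)]

lemma tendsto_q : Tendsto (fun j ↦ (q j : ℝ)) atTop atTop :=
  tendsto_atTop_of_geom_le (c := 3) (by norm_num [q_zero]) (by norm_num)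
    fun j ↦ by exact_mod_cast three_mul_q_le_q_succ j

lemma abs_q_mul_p_sub_p_mul_q_le (j : ℕ) :
    |q (j + 1) * p (j + 2) - p (j + 1) * q (j + 2)| ≤ 3 * q j := by
  have hcross : q (j + 1) * p (j + 2) - p (j + 1) * q (j + 2)
      = (fibMatrix (j + 1)).det * (twist j * fibMatrix j) 1 0 := by
    rw [← fibMatrix_one_zero, ← fibMatrix_one_zero]
    exact mul_mul_apply_cross _ _ _
  obtain ⟨h0, h3⟩ := twist_mul_apply_bounds j (A := fibMatrix j)
    (by rw [fibMatrix_one_zero]; exact p_nonneg j) (by rw [fibMatrix_one_zero]; exact p_le_q j)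
  rw [hcross, abs_mul, abs_det_fibMatrix, one_mul, abs_of_nonneg h0]
  exact h3

lemma abs_div_sub_div_le (j : ℕ) :
    |(p (j + 1) : ℝ) / q (j + 1) - p j / q j| ≤ 1 / (q j : ℝ) ^ 2 := by
  cases j with
  | zero => norm_num [p, q, fibMatrix]
  | succ j =>
    have hq := q_pos j
    have hq1 := q_pos (j + 1)
    have hq2 := q_pos (j + 2)
    have h3 : (3 : ℝ) * (q (j + 1) * q j) ≤ q (j + 2) := by
      exact_mod_cast (q_add_two_bounds j).1
    have hcross : |(q (j + 1) * p (j + 2) - p (j + 1) * q (j + 2) : ℝ)| ≤ 3 * q j := by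
      exact_mod_cast abs_q_mul_p_sub_p_mul_q_le j
    have hsub : (p (j + 2) : ℝ) / q (j + 2) - p (j + 1) / q (j + 1)
        = (q (j + 1) * p (j + 2) - p (j + 1) * q (j + 2) : ℝ) / (q (j + 1) * q (j + 2)) := by
      field_simp
    rw [hsub, abs_div, abs_of_pos (mul_pos hq1 hq2),
      div_le_div_iff₀ (mul_pos hq1 hq2) (pow_pos hq1 2)]
    calc |(q (j + 1) * p (j + 2) - p (j + 1) * q (j + 2) : ℝ)| * (q (j + 1) : ℝ) ^ 2
        ≤ 3 * q j * (q (j + 1) : ℝ) ^ 2 := by gcongr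
      _ ≤ 1 * ((q (j + 1) : ℝ) * q (j + 2)) := by nlinarith

lemma exists_abs_q_mul_sub_p_le : ∃ ξ : ℝ, |ξ| ≤ 1 ∧ ∀ j, |q j * ξ - p j| ≤ 2 / q j := by
  have hhalf (j : ℕ) : 1 / (q (j + 1) : ℝ) ^ 2 ≤ 1 / (q j : ℝ) ^ 2 / 2 := by
    have h3 : (3 : ℝ) * q j ≤ q (j + 1) := by exact_mod_cast three_mul_q_le_q_succ j
    rw [div_div, div_le_div_iff_of_pos_left one_pos (pow_pos (q_pos _) 2)
      (mul_pos (pow_pos (q_pos _) 2) two_pos)]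
    nlinarith [q_pos j]
  obtain ⟨ξ, hlim, hdist⟩ := exists_tendsto_dist_le_two_mul (x := fun j ↦ (p j : ℝ) / q j)
    (e := fun j ↦ 1 / (q j : ℝ) ^ 2) hhalf fun j ↦ by rw [dist_comm]; exact abs_div_sub_div_le j
  have hmem : ξ ∈ Set.Icc (0 : ℝ) 1 := isClosed_Icc.mem_of_tendsto hlim <| .of_forall fun j ↦
    ⟨div_nonneg (by exact_mod_cast p_nonneg j) (q_pos j).le,
      div_le_one_of_le₀ (by exact_mod_cast p_le_q j) (q_pos j).le⟩
  refine ⟨ξ, abs_le.2 ⟨by linarith [hmem.1], hmem.2⟩, fun j ↦ ?_⟩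
  have hq := q_pos j
  calc |q j * ξ - p j| = q j * dist ((p j : ℝ) / q j) ξ := by
        rw [Real.dist_eq, abs_sub_comm, ← abs_of_pos hq, ← abs_mul, abs_of_pos hq]
        congr 1; field_simp
    _ ≤ q j * (2 * (1 / q j ^ 2)) := by gcongr; exact hdist j
    _ = 2 / q j := by field_simp

lemma abs_q_mul_sq_sub_r_le {ξ : ℝ} (hξ : |ξ| ≤ 1) (h1 : ∀ j, |q j * ξ - p j| ≤ 2 / q j)
    (j : ℕ) : |q j * ξ ^ 2 - r j| ≤ 5 / q j :=
  abs_mul_sq_sub_le (q_pos j) hξ (by exact_mod_cast p_nonneg j) (by exact_mod_cast p_le_q j)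
    (by exact_mod_cast abs_p_sq_sub_q_mul_r j) (h1 j)

lemma abs_det_symVec_fibMatrix (j : ℕ) :
    |(of ![symVec (fibMatrix j), symVec (fibMatrix (j + 1)), symVec (fibMatrix (j + 2))]).det|
      = 1 := by
  rw [det_symVec_eq_neg_trace (isSymm_fibMatrix j) (isSymm_fibMatrix _) (isSymm_fibMatrix _),
    fibMatrix_add_two, trace_J_mul_J_mul_J_mul _ (isSymm_fibMatrix j) (isSymm_fibMatrix _),
    neg_neg, abs_mul, abs_mul, abs_det_fibMatrix, abs_det_fibMatrix, one_mul, one_mul]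
  rcases twist_eq j with h | h <;> rw [h] <;> decide

lemma linearIndependent_int_of_approx {ξ : ℝ} (h1 : ∀ j, |q j * ξ - p j| ≤ 2 / q j)
    (h2 : ∀ j, |q j * ξ ^ 2 - r j| ≤ 5 / q j) : LinearIndependent ℤ ![1, ξ, ξ ^ 2] := by
  rw [Fintype.linearIndependent_iff]
  intro g hg
  have hrel : g 0 + g 1 * ξ + g 2 * ξ ^ 2 = 0 := by
    simpa [Fin.sum_univ_three, zsmul_eq_mul] using hg
  obtain ⟨N, hN⟩ :=
    (tendsto_q.eventually_gt_atTop (2 * |(g 1 : ℝ)| + 5 * |(g 2 : ℝ)|)).exists_forall_of_atTop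
  have hdot (j : ℕ) (hj : N ≤ j) : q j * g 0 + p j * g 1 + r j * g 2 = 0 :=
    int_combination_eq_zero hrel (q_pos j) (h1 j) (h2 j) (hN j hj)
  have hker : of ![symVec (fibMatrix N), symVec (fibMatrix (N + 1)), symVec (fibMatrix (N + 2))]
      *ᵥ g = 0 := by
    ext i
    fin_cases i <;>
      simpa [mulVec, dotProduct, Fin.sum_univ_three, symVec, q, p, r] using hdot _ (by omega)
  exact congrFun (eq_zero_of_mulVec_eq_zero
    (by rw [← abs_ne_zero, abs_det_symVec_fibMatrix]; exact one_ne_zero) hker)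

lemma log_q_succ_le (j : ℕ) :
    Real.log (q (j + 1)) ≤ φ * Real.log (q j) + φ ^ 2 * Real.log 8 := by
  have hlog8 : 0 ≤ Real.log 8 := Real.log_nonneg (by norm_num)
  have hstep (j : ℕ) :
      |Real.log (q (j + 2)) - Real.log (q (j + 1)) - Real.log (q j)| ≤ Real.log 8 := by
    have hq := q_pos j
    have hq1 := q_pos (j + 1)
    obtain ⟨h3, h8⟩ := q_add_two_bounds j
    have hratio : 3 ≤ (q (j + 2) : ℝ) / (q (j + 1) * q j) ∧
        (q (j + 2) : ℝ) / (q (j + 1) * q j) ≤ 8 := by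
      rw [le_div_iff₀ (by positivity), div_le_iff₀ (by positivity)]
      exact ⟨by exact_mod_cast h3, by exact_mod_cast h8⟩
    rw [sub_sub, ← Real.log_mul hq1.ne' hq.ne', ← Real.log_div (q_pos _).ne' (by positivity),
      abs_le]
    exact ⟨by linarith [Real.log_nonneg (by linarith : (1 : ℝ) ≤ _)],
      Real.log_le_log (by linarith) hratio.2⟩
  have h0 : |Real.log (q 1) - φ * Real.log (q 0)| ≤ φ ^ 2 * Real.log 8 := by
    have hq1 : (q 1 : ℝ) = 4 := by norm_num [q, fibMatrix]
    rw [q_zero, hq1, Int.cast_one, Real.log_one, mul_zero, sub_zero,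
      abs_of_nonneg (Real.log_nonneg (by norm_num))]
    calc Real.log 4 ≤ 1 * Real.log 8 := by
          rw [one_mul]; exact Real.log_le_log (by norm_num) (by norm_num)
      _ ≤ φ ^ 2 * Real.log 8 := by gcongr; exact one_le_pow₀ Real.one_lt_goldenRatio.le
  linarith [(abs_le.1 (abs_sub_goldenRatio_mul_le (a := fun j ↦ Real.log (q j)) hstep h0 j)).2]

lemma inv_q_le_rpow {X : ℝ} (hX : 0 < X) {j : ℕ} (hXq : X < q (j + 1)) :
    (q j : ℝ)⁻¹ ≤ 8 ^ φ * X ^ (-1 / φ) := by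
  have hlog : Real.log X ≤ φ * Real.log (q j) + φ ^ 2 * Real.log 8 :=
    (Real.log_lt_log hX hXq).le.trans (log_q_succ_le j)
  have hdiv : Real.log X / φ ≤ Real.log (q j) + φ * Real.log 8 := by
    rw [div_le_iff₀ Real.goldenRatio_pos]; linarith
  rw [← Real.exp_log (q_pos j), ← Real.exp_neg, Real.rpow_def_of_pos (by norm_num),
    Real.rpow_def_of_pos hX, ← Real.exp_add, Real.exp_le_exp]
  linarith [show Real.log X * (-1 / φ) = -(Real.log X / φ) by ring]

end Extremal

open Extremal in
theorem extremal_gaussianInt :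
    ∃ ξ : ℂ,
      LinearIndependent ℚ⟮Complex.I⟯ ![(1 : ℂ), ξ, ξ ^ 2] ∧
      ∃ c : ℝ, 0 < c ∧ ∃ X₀ : ℝ, ∀ X : ℝ, X₀ ≤ X →
        ∃ x : Fin 3 → GaussianInt, x ≠ 0 ∧
          ‖GaussianInt.toComplex (x 0)‖ ≤ X ∧
          max (‖GaussianInt.toComplex (x 0) * ξ - GaussianInt.toComplex (x 1)‖)
              (‖GaussianInt.toComplex (x 0) * ξ ^ 2 - GaussianInt.toComplex (x 2)‖)
            ≤ c * X ^ (-1 / Real.goldenRatio) := by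
  obtain ⟨ξ, hξ, h1⟩ := exists_abs_q_mul_sub_p_le
  have h2 := abs_q_mul_sq_sub_r_le hξ h1
  refine ⟨ξ, ?_, 5 * 8 ^ φ, by positivity, 1, fun X hX ↦ ?_⟩
  · have hQ := (LinearIndependent.iff_fractionRing ℤ ℚ).1 (linearIndependent_int_of_approx h1 h2)
    convert hQ.ofReal_adjoin_I using 1
    ext i; fin_cases i <;> simp
  obtain ⟨n, hn⟩ := (tendsto_q.eventually_gt_atTop X).exists
  obtain ⟨j, hjX, hXj⟩ :=
    exists_le_lt_succ (u := fun j ↦ (q j : ℝ)) (by simpa [q_zero] using hX) n hn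
  have hrate : 5 / (q j : ℝ) ≤ 5 * 8 ^ φ * X ^ (-1 / φ) := by
    rw [div_eq_mul_inv, mul_assoc]; gcongr; exact inv_q_le_rpow (by linarith) hXj
  refine ⟨![(q j : GaussianInt), (p j : GaussianInt), (r j : GaussianInt)], fun h ↦ ?_, ?_,
    max_le ?_ ?_⟩
  · have hq0 := congrFun h 0
    simp only [cons_val_zero, Pi.zero_apply, Int.cast_eq_zero] at hq0
    linarith [one_le_q j]
  · simpa [abs_of_pos (q_pos j)] using hjX
  · refine (norm_toComplex_intCast_mul_sub (q j) (p j) ξ).trans_le ((h1 j).trans ?_)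
    exact (div_le_div_of_nonneg_right (by norm_num) (q_pos j).le).trans hrate
  · rw [← Complex.ofReal_pow]
    exact (norm_toComplex_intCast_mul_sub (q j) (r j) (ξ ^ 2)).trans_le ((h2 j).trans hrate)
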